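/- arXiv:1509.00897 — 2 statements merged into one kernel-verified Lean document; each statement's English description precedes it below -/
import Mathlib

section
/- Let μ₀ be a finite nonnegative measure on ℝ^ℓ that is symmetric (invariant under ξ ↦ −ξ), and let γ(x) := (2π)^{−ℓ} ∫_{ℝ^ℓ} e^{i ξ·x} μ₀(dξ), a bounded continuous real-valued positive-definite function. Let t > 0, let n ≥ 2 be an integer, and let G = (G^1, …, G^n) be a jointly measurable centered Gaussian process indexed by [0,t] with values in (ℝ^ℓ)^n. Then for every measurable deterministic function y = (y^{jk})_{1≤j<k≤n} : [0,t] → (ℝ^ℓ)^{n(n−1)/2} and every real number a, one has (as elements of [0,∞]): E exp{∫_0^t Σ_{1≤j<k≤n} a γ(G_s^j − G_s^k + y_s^{jk}) ds} ≤ E exp{∫_0^t Σ_{1≤j<k≤n} |a| γ(G_s^j − G_s^k) ds}. -/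
open MeasureTheory ProbabilityTheory Filter Topology
open scoped ENNReal NNReal

noncomputable section

variable {Ω : Type*} [MeasureSpace Ω]

/-- Euclidean dot product. -/
def edot {ι : Type*} [Fintype ι] (x y : EuclideanSpace ℝ ι) : ℝ := ∑ q, x q * y q

/-- A process indexed by `T ⊆ ℝ` with values in a Euclidean space is a centered Gaussian
process if every finite real linear combination of its coordinates is a centered
real Gaussian random variable. -/
def IsCenteredGaussianProcess {ι : Type*} [Fintype ι]
    (T : Set ℝ) (X : ℝ → Ω → EuclideanSpace ℝ ι) : Prop :=
  ∀ (m : ℕ) (ts : Fin m → ℝ), (∀ i, ts i ∈ T) → ∀ v : Fin m → EuclideanSpace ℝ ι,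
    ∃ σ : NNReal,
      Measure.map (fun ω => ∑ i, edot (v i) (X (ts i) ω)) ℙ = gaussianReal 0 σ

/-- A Brownian bridge over `[a,b]` in `ℝ^ℓ`, from `0` to `0`. -/
structure IsBrownianBridge {ℓ : ℕ} (a b : ℝ)
    (B : ℝ → Ω → EuclideanSpace ℝ (Fin ℓ)) : Prop where
  measurable : Measurable (Function.uncurry B)
  gaussian : IsCenteredGaussianProcess (Set.Icc a b) B
  indep : iIndepFun (fun q ω => fun s : ℝ => B s ω q) ℙ
  cov : ∀ q : Fin ℓ, ∀ r s : ℝ, a ≤ r → r ≤ s → s ≤ b →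
    ∫ ω, B r ω q * B s ω q ∂ℙ = (r - a) * (1 - (s - a) / (b - a))

/-- A standard Brownian motion in `ℝ^ℓ`. -/
structure IsBrownianMotion {ℓ : ℕ}
    (B : ℝ → Ω → EuclideanSpace ℝ (Fin ℓ)) : Prop where
  measurable : Measurable (Function.uncurry B)
  gaussian : IsCenteredGaussianProcess (Set.Ici 0) B
  indep : iIndepFun (fun q ω => fun s : ℝ => B s ω q) ℙ
  cov : ∀ q : Fin ℓ, ∀ r s : ℝ, 0 ≤ r → 0 ≤ s →
    ∫ ω, B r ω q * B s ω q ∂ℙ = min r s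

/-- The regularized covariance `γ_ε(x) = (2π)^{-ℓ} ∫ e^{-ε|ξ|²} e^{iξ·x} μ(dξ)` (real part). -/
def gammaEps (ℓ : ℕ) (μ : Measure (EuclideanSpace ℝ (Fin ℓ))) (ε : ℝ)
    (x : EuclideanSpace ℝ (Fin ℓ)) : ℝ :=
  ((2 * Real.pi) ^ ℓ)⁻¹ *
    (∫ ξ, (Real.exp (-ε * ‖ξ‖ ^ 2) : ℂ) * Complex.exp (Complex.I * (edot ξ x : ℂ)) ∂μ).re

/-- The covariance `γ(x) = (2π)^{-ℓ} ∫ e^{iξ·x} μ₀(dξ)` (real part) of a finite measure. -/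
def gammaOf (ℓ : ℕ) (μ₀ : Measure (EuclideanSpace ℝ (Fin ℓ)))
    (x : EuclideanSpace ℝ (Fin ℓ)) : ℝ :=
  ((2 * Real.pi) ^ ℓ)⁻¹ * (∫ ξ, Complex.exp (Complex.I * (edot ξ x : ℂ)) ∂μ₀).re

def SymmetricMeasure {ℓ : ℕ} (μ : Measure (EuclideanSpace ℝ (Fin ℓ))) : Prop :=
  μ.map (fun ξ => -ξ) = μ

def TemperedMeasure {ℓ : ℕ} (μ : Measure (EuclideanSpace ℝ (Fin ℓ))) : Prop :=
  ∀ ε : ℝ, 0 < ε → (∫⁻ ξ, ENNReal.ofReal (Real.exp (-ε * ‖ξ‖ ^ 2)) ∂μ) < ⊤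

/-- Hypothesis (H.1). -/
def HypH1 (ℓ : ℕ) (μ : Measure (EuclideanSpace ℝ (Fin ℓ))) : Prop :=
  ℓ = 1 ∧ ∃ f : EuclideanSpace ℝ (Fin ℓ) → ℝ, Measurable f ∧ (∀ ξ, 0 ≤ f ξ) ∧
    (∀ ξ, f (-ξ) = f ξ) ∧ (∃ κ₀ : ℝ, 0 < κ₀ ∧ ∀ ξ η, f (ξ + η) ≤ κ₀ * (f ξ + f η)) ∧
    μ = volume.withDensity (fun ξ => ENNReal.ofReal (f ξ)) ∧
    (∫⁻ ξ, ENNReal.ofReal (f ξ ^ 2 / (1 + ‖ξ‖ ^ 2))) < ⊤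

/-- Hypothesis (H.2): the inverse Fourier transform of `μ`, in the sense of tempered
distributions, is the nonnegative locally integrable function `γ`, and Dalang's
condition holds. -/
def HypH2 (ℓ : ℕ) (μ : Measure (EuclideanSpace ℝ (Fin ℓ)))
    (γ : EuclideanSpace ℝ (Fin ℓ) → ℝ) : Prop :=
  (∀ x, 0 ≤ γ x) ∧ LocallyIntegrable γ volume ∧
  (∀ φ : SchwartzMap (EuclideanSpace ℝ (Fin ℓ)) ℂ,
    ∫ x, (γ x : ℂ) * φ x =
      ((2 * Real.pi) ^ ℓ)⁻¹ •
        ∫ ξ, (∫ x, Complex.exp (Complex.I * (edot ξ x : ℂ)) * φ x) ∂μ) ∧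
  (∫⁻ ξ, ENNReal.ofReal (1 / (1 + ‖ξ‖ ^ 2)) ∂μ) < ⊤

/-- The set `A` of admissible functions in the Fourier variational formula. -/
def Acal (ι : Type*) [Fintype ι] : Set (EuclideanSpace ℝ ι → ℂ) :=
  {h | Measurable h ∧ (∫ ξ, ‖h ξ‖ ^ 2) = 1 ∧
    (∫⁻ ξ, (‖ξ‖₊ : ℝ≥0∞) ^ 2 * (‖h ξ‖₊ : ℝ≥0∞) ^ 2) < ⊤ ∧
    ∀ ξ, h (-ξ) = starRingEnd ℂ (h ξ)}

/-- Convolution `h * h`. -/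
def conv {ι : Type*} [Fintype ι] (h : EuclideanSpace ℝ ι → ℂ)
    (z : EuclideanSpace ℝ ι) : ℂ := ∫ w, h w * h (z - w)

/-- The vector `e_{jk}(ξ) ∈ (ℝ^ℓ)^n` whose `j`-th block is `-ξ`, `k`-th block is `ξ`. -/
def ejk (ℓ n : ℕ) (j k : Fin n) (ξ : EuclideanSpace ℝ (Fin ℓ)) :
    EuclideanSpace ℝ (Fin n × Fin ℓ) :=
  WithLp.toLp 2 (fun p : Fin n × Fin ℓ => if p.1 = j then -ξ p.2 else if p.1 = k then ξ p.2 else 0)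

/-- The set of values in the Fourier-mode variational formula for `𝓔_n(μ)`. -/
def calESet (ℓ n : ℕ) (μ : Measure (EuclideanSpace ℝ (Fin ℓ))) : Set ℝ :=
  {r | ∃ h ∈ Acal (Fin n × Fin ℓ),
    r = ((2 * Real.pi) ^ ℓ)⁻¹ *
        (∫ ξ, (∑ j, ∑ k, if j < k then (conv h (ejk ℓ n j k ξ)).re else 0) ∂μ)
      - (1 / 2) * ∫ ξ, ‖ξ‖ ^ 2 * ‖h ξ‖ ^ 2}

/-- The variational quantity `𝓔_n(μ)` in Fourier mode. -/
def calE (ℓ n : ℕ) (μ : Measure (EuclideanSpace ℝ (Fin ℓ))) : ℝ := sSup (calESet ℓ n μ)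

/-- The set of values in the variational formula for `𝓔_H`. -/
def calEHSet (ℓ : ℕ) (μ : Measure (EuclideanSpace ℝ (Fin ℓ))) : Set ℝ :=
  {r | ∃ h ∈ Acal (Fin ℓ),
    r = ((2 * Real.pi) ^ ℓ)⁻¹ * (∫ ξ, ‖conv h ξ‖ ^ 2 ∂μ)
      - ∫ ξ, ‖ξ‖ ^ 2 * ‖h ξ‖ ^ 2}

/-- The variational quantity `𝓔_H(μ)`. -/
def calEH (ℓ : ℕ) (μ : Measure (EuclideanSpace ℝ (Fin ℓ))) : ℝ := sSup (calEHSet ℓ μ)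

/-- `v` is the distributional (weak) gradient of `g`. -/
def IsWeakGradient {ι : Type*} [Fintype ι] [DecidableEq ι]
    (g : EuclideanSpace ℝ ι → ℝ) (v : EuclideanSpace ℝ ι → EuclideanSpace ℝ ι) : Prop :=
  ∀ φ : EuclideanSpace ℝ ι → ℝ, ContDiff ℝ (⊤ : ℕ∞) φ → HasCompactSupport φ → ∀ i : ι,
    ∫ x, g x * fderiv ℝ φ x (EuclideanSpace.single i 1) = -∫ x, v x i * φ x

/-- The set of values in the `H¹`-variational formula for `𝓔(F)`. -/
def calEFSet {ι : Type*} [Fintype ι] [DecidableEq ι]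
    (F : EuclideanSpace ℝ ι → ℝ) : Set ℝ :=
  {r | ∃ g : EuclideanSpace ℝ ι → ℝ, ∃ v : EuclideanSpace ℝ ι → EuclideanSpace ℝ ι,
    Measurable g ∧ Measurable v ∧ (∫ x, g x ^ 2) = 1 ∧
    (∫⁻ x, (‖v x‖₊ : ℝ≥0∞) ^ 2) < ⊤ ∧ IsWeakGradient g v ∧
    r = (∫ x, F x * g x ^ 2) - (1 / 2) * ∫ x, ‖v x‖ ^ 2}

/-- The `H¹`-form variational quantity `𝓔(F)`. -/
def calEF {ι : Type*} [Fintype ι] [DecidableEq ι]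
    (F : EuclideanSpace ℝ ι → ℝ) : ℝ := sSup (calEFSet F)


section AuxProofs
open Real Complex

section edot
variable {ι : Type*} [Fintype ι]

lemma edot_add_right (x a b : EuclideanSpace ℝ ι) : edot x (a + b) = edot x a + edot x b := by
  simp [edot, mul_add, Finset.sum_add_distrib]

lemma edot_sub_right (x a b : EuclideanSpace ℝ ι) : edot x (a - b) = edot x a - edot x b := by
  simp [edot, mul_sub, Finset.sum_sub_distrib]

lemma edot_neg_left (x a : EuclideanSpace ℝ ι) : edot (-x) a = -edot x a := by
  simp [edot, Finset.sum_neg_distrib]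

@[fun_prop]
lemma continuous_edot2 {α : Type*} [TopologicalSpace α] {f g : α → EuclideanSpace ℝ ι}
    (hf : Continuous f) (hg : Continuous g) : Continuous fun x => edot (f x) (g x) := by
  unfold edot
  fun_prop

lemma continuous_edot : Continuous (fun p : (EuclideanSpace ℝ ι) × (EuclideanSpace ℝ ι) => edot p.1 p.2) := by
  unfold edot
  fun_prop

lemma measurable_edot_pair : Measurable (fun p : (EuclideanSpace ℝ ι) × (EuclideanSpace ℝ ι) => edot p.1 p.2) :=
  continuous_edot.measurable
end edot

section gamma
variable {ℓ : ℕ} (μ₀ : Measure (EuclideanSpace ℝ (Fin ℓ))) [IsFiniteMeasure μ₀]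

lemma stronglyMeasurable_cexp_edot :
    StronglyMeasurable (fun p : (EuclideanSpace ℝ (Fin ℓ)) × (EuclideanSpace ℝ (Fin ℓ)) =>
      Complex.exp (Complex.I * (edot p.2 p.1 : ℂ))) := by
  apply Continuous.stronglyMeasurable
  fun_prop

lemma measurable_J :
    StronglyMeasurable (fun x : EuclideanSpace ℝ (Fin ℓ) =>
      ∫ ξ, Complex.exp (Complex.I * (edot ξ x : ℂ)) ∂μ₀) :=
  (stronglyMeasurable_cexp_edot (ℓ := ℓ)).integral_prod_right'

lemma measurable_gammaOf : Measurable (gammaOf ℓ μ₀) := by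
  unfold gammaOf
  exact (Complex.measurable_re.comp (measurable_J μ₀).measurable).const_mul _

lemma norm_cexp_I_mul_real (r : ℝ) : ‖Complex.exp (Complex.I * (r:ℂ))‖ = 1 := by
  rw [mul_comm, Complex.norm_exp_ofReal_mul_I]

lemma norm_J_le (x : EuclideanSpace ℝ (Fin ℓ)) :
    ‖∫ ξ, Complex.exp (Complex.I * (edot ξ x : ℂ)) ∂μ₀‖ ≤ (μ₀ Set.univ).toReal := by
  calc ‖∫ ξ, Complex.exp (Complex.I * (edot ξ x : ℂ)) ∂μ₀‖
      ≤ 1 * (μ₀ Set.univ).toReal := by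
        apply norm_integral_le_of_norm_le_const
        exact ae_of_all _ fun ξ => (norm_cexp_I_mul_real _).le
    _ = _ := one_mul _

lemma abs_gammaOf_le (x : EuclideanSpace ℝ (Fin ℓ)) :
    |gammaOf ℓ μ₀ x| ≤ ((2 * Real.pi) ^ ℓ)⁻¹ * (μ₀ Set.univ).toReal := by
  rw [gammaOf, abs_mul, _root_.abs_of_nonneg (by positivity : (0:ℝ) ≤ ((2 * Real.pi) ^ ℓ)⁻¹)]
  gcongr
  exact (Complex.abs_re_le_norm _).trans (norm_J_le μ₀ x)

lemma J_conj (hsym : SymmetricMeasure μ₀) (x : EuclideanSpace ℝ (Fin ℓ)) :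
    ((∫ ξ, Complex.exp (Complex.I * (edot ξ x : ℂ)) ∂μ₀).re : ℂ)
      = ∫ ξ, Complex.exp (Complex.I * (edot ξ x : ℂ)) ∂μ₀ := by
  rw [Complex.re_eq_add_conj]
  have h1 : (starRingEnd ℂ) (∫ ξ, Complex.exp (Complex.I * (edot ξ x : ℂ)) ∂μ₀)
      = ∫ ξ, Complex.exp (Complex.I * (edot ξ x : ℂ)) ∂μ₀ := by
    rw [← integral_conj]
    have h2 : ∀ ξ : EuclideanSpace ℝ (Fin ℓ), (starRingEnd ℂ) (Complex.exp (Complex.I * (edot ξ x : ℂ)))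
        = Complex.exp (Complex.I * (edot (-ξ) x : ℂ)) := by
      intro ξ
      rw [← Complex.exp_conj]
      simp only [edot_neg_left, Complex.ofReal_neg, map_mul, Complex.conj_I, Complex.conj_ofReal]
      ring_nf
    simp_rw [h2]
    conv_rhs => rw [← hsym]
    rw [integral_map (by fun_prop) (by apply Continuous.aestronglyMeasurable; fun_prop)]
  rw [h1]
  push_cast
  ring
end gamma
section helpers
variable {ι : Type*} [Fintype ι]

lemma edot_sub_left (a b x : EuclideanSpace ℝ ι) : edot (a - b) x = edot a x - edot b x := by
  simp [edot, sub_mul, Finset.sum_sub_distrib]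

lemma edot_zero_left (x : EuclideanSpace ℝ ι) : edot 0 x = 0 := by
  simp [edot]

lemma edot_ite_left (c : Prop) [Decidable c] (a : EuclideanSpace ℝ ι) (x : EuclideanSpace ℝ ι) :
    edot (if c then a else 0) x = if c then edot a x else 0 := by
  split_ifs <;> simp [edot_zero_left]

lemma integrable_of_bdd {α : Type*} {F : Type*} [NormedAddCommGroup F] [MeasurableSpace α]
    {μ : Measure α} [IsFiniteMeasure μ] {f : α → F} (hm : AEStronglyMeasurable f μ)
    {C : ℝ} (h : ∀ x, ‖f x‖ ≤ C) : Integrable f μ :=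
  Integrable.mono' (integrable_const C) hm (ae_of_all _ h)

lemma integral_pi_fintype_prod {α : Type*} [MeasurableSpace α] (μ : Measure α) [SigmaFinite μ]
    {m : ℕ} (f : Fin m → α → ℂ) :
    ∫ x : Fin m → α, ∏ i, f i (x i) ∂(Measure.pi fun _ => μ) = ∏ i, ∫ x, f i x ∂μ := by
  letI : MeasureSpace α := ⟨μ⟩
  haveI : SigmaFinite (volume : Measure α) := ‹_›
  exact MeasureTheory.integral_fintype_prod_eq_prod (ι := Fin m) (fun i => f i) (μ := fun _ => μ)

end helpers
lemma charOne_gaussianReal (v : ℝ≥0) :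
    ∫ x : ℝ, Complex.exp (Complex.I * x) ∂(gaussianReal 0 v) = Real.exp (-(v:ℝ)/2) := by
  rcases eq_or_ne v 0 with hv | hv
  · subst hv; simp
  · have hv' : (0:ℝ) < v := lt_of_le_of_ne v.coe_nonneg (by exact_mod_cast hv.symm)
    rw [gaussianReal_of_var_ne_zero _ hv, gaussianPDF_def]
    have hrw : (fun x => ENNReal.ofReal (gaussianPDFReal 0 v x))
        = fun x => ((Real.toNNReal (gaussianPDFReal 0 v x) : ℝ≥0) : ℝ≥0∞) := rfl
    rw [hrw, integral_withDensity_eq_integral_smul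
      ((measurable_gaussianPDFReal 0 v).real_toNNReal)]
    have hpdf : ∀ x : ℝ, (Real.toNNReal (gaussianPDFReal 0 v x)) • Complex.exp (Complex.I * x)
        = ((√(2 * π * v))⁻¹ : ℝ) • (Complex.exp (Complex.I * (1:ℂ) * x) *
            Complex.exp (-(1/(2*(v:ℂ))) * (x:ℂ)^2)) := by
      intro x
      rw [NNReal.smul_def, Real.coe_toNNReal _ (gaussianPDFReal_nonneg 0 v x)]
      rw [gaussianPDFReal]
      have h1 : Complex.exp (-(1/(2*(v:ℂ))) * (x:ℂ)^2) = ((rexp (- (x - 0)^2/(2*v)) : ℝ) : ℂ) := by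
        rw [Complex.ofReal_exp]
        congr 1
        push_cast
        ring
      rw [h1, mul_smul]
      congr 1
      rw [mul_comm]
      norm_cast
      simp [Complex.ofReal_exp, Complex.real_smul]
      ring
    simp_rw [hpdf]
    rw [integral_smul]
    have hb : (0:ℝ) < (-( -(1/(2*(v:ℂ))))).re := by
      simp [hv'.le]
      positivity
    have := fourierIntegral_gaussian (b := 1/(2*(v:ℂ))) (by simpa using hb) 1
    rw [this]
    have hvc : (v:ℂ) ≠ 0 := by exact_mod_cast hv
    have h2 : ((π:ℂ) / (1 / (2 * (v:ℂ)))) = ((2 * π * v : ℝ) : ℂ) := by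
      push_cast; field_simp
    have h3 : (-(1:ℂ) ^ 2 / (4 * (1 / (2 * (v:ℂ))))) = ((-(v:ℝ)/2 : ℝ) : ℂ) := by
      push_cast; field_simp; ring
    rw [h2, h3]
    have h4 : ((2 * π * v : ℝ) : ℂ) ^ (1/2 : ℂ) = ((√(2 * π * v) : ℝ) : ℂ) := by
      rw [show (1/2 : ℂ) = ((1/2 : ℝ) : ℂ) by norm_num,
        ← Complex.ofReal_cpow (by positivity)]
      rw [Real.sqrt_eq_rpow]
    rw [h4, ← Complex.ofReal_exp, Complex.real_smul]
    have h5 : (√(2 * π * (v:ℝ)) : ℝ) ≠ 0 := by positivity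
    push_cast
    field_simp
    have hA : ((√2 : ℝ) : ℂ) * ((√π : ℝ) : ℂ) * ((√(v:ℝ) : ℝ) : ℂ) ≠ 0 := by
      rw [← Complex.ofReal_mul, ← Complex.ofReal_mul]
      rw [Complex.ofReal_ne_zero]
      positivity
    exact div_self (by exact_mod_cast h5)

lemma edot_zero_right {ι : Type*} [Fintype ι] (x : EuclideanSpace ℝ ι) : edot x 0 = 0 := by
  simp [edot]

section core
variable {Ω : Type*} [MeasureSpace Ω] [IsProbabilityMeasure (ℙ : Measure Ω)]

lemma core_ineq (ℓ n : ℕ) (μ₀ : Measure (EuclideanSpace ℝ (Fin ℓ)))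
    [IsFiniteMeasure μ₀] (hsym : SymmetricMeasure μ₀) (t : ℝ)
    (G : ℝ → Ω → Fin n → EuclideanSpace ℝ (Fin ℓ))
    (hGmeas : Measurable (Function.uncurry G))
    (hGgauss : ∀ (m : ℕ) (ts : Fin m → ℝ), (∀ i, ts i ∈ Set.Icc 0 t) →
      ∀ v : Fin m → Fin n → EuclideanSpace ℝ (Fin ℓ),
        ∃ σ : NNReal,
          Measure.map (fun ω => ∑ i, ∑ j, edot (v i j) (G (ts i) ω j)) ℙ =
            gaussianReal 0 σ)
    (m : ℕ) (s : Fin m → ℝ) (hs : ∀ i, s i ∈ Set.Icc 0 t)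
    (p : Fin m → Fin n × Fin n)
    (c : Fin m → EuclideanSpace ℝ (Fin ℓ)) :
    |∫ ω, ∏ i, gammaOf ℓ μ₀ (G (s i) ω (p i).1 - G (s i) ω (p i).2 + c i) ∂ℙ|
      ≤ ∫ ω, ∏ i, gammaOf ℓ μ₀ (G (s i) ω (p i).1 - G (s i) ω (p i).2) ∂ℙ := by
  classical
  set K : ℝ := ((2 * Real.pi) ^ ℓ)⁻¹ with hKdef
  have hK : 0 ≤ K := by positivity
  set ν : Measure (Fin m → EuclideanSpace ℝ (Fin ℓ)) := Measure.pi fun _ => μ₀ with hν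
  haveI : IsFiniteMeasure ν := by rw [hν]; infer_instance
  set z : Ω → Fin m → EuclideanSpace ℝ (Fin ℓ) :=
    fun ω i => G (s i) ω (p i).1 - G (s i) ω (p i).2 with hz
  have hGm1 : ∀ (r : ℝ) (j : Fin n), Measurable (fun ω => G r ω j) := by
    intro r j
    have h0 : Measurable (fun ω : Ω => Function.uncurry G (r, ω)) :=
      hGmeas.comp measurable_prodMk_left
    exact (measurable_pi_apply j).comp h0
  have hzmeas : ∀ i, Measurable (fun ω => z ω i) :=
    fun i => (hGm1 (s i) (p i).1).sub (hGm1 (s i) (p i).2)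
  set Φ : (Fin m → EuclideanSpace ℝ (Fin ℓ)) → (Fin m → EuclideanSpace ℝ (Fin ℓ)) → Ω → ℂ :=
    fun d ξ ω => ∏ i, Complex.exp (Complex.I * (edot (ξ i) (z ω i + d i) : ℂ)) with hΦ
  have hΦnorm : ∀ d ξ ω, ‖Φ d ξ ω‖ = 1 := by
    intro d ξ ω
    rw [hΦ]
    simp only [norm_prod]
    exact Finset.prod_eq_one fun i _ => norm_cexp_I_mul_real _
  have hΦmeasJ : ∀ d, Measurable
      (fun q : Ω × (Fin m → EuclideanSpace ℝ (Fin ℓ)) => Φ d q.2 q.1) := by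
    intro d
    apply Finset.measurable_prod
    intro i _
    have h1 : Measurable (fun q : Ω × (Fin m → EuclideanSpace ℝ (Fin ℓ)) =>
        edot (q.2 i) (z q.1 i + d i)) := by
      have hpair : Measurable (fun q : Ω × (Fin m → EuclideanSpace ℝ (Fin ℓ)) =>
          ((q.2 i, z q.1 i + d i) : EuclideanSpace ℝ (Fin ℓ) × EuclideanSpace ℝ (Fin ℓ))) :=
        Measurable.prodMk ((measurable_pi_apply i).comp measurable_snd)
          (((hzmeas i).comp measurable_fst).add_const (d i))
      exact continuous_edot.measurable.comp hpair
    exact Complex.continuous_exp.measurable.comp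
      ((Complex.measurable_ofReal.comp h1).const_mul Complex.I)
  have hΦint : ∀ d, Integrable
      (fun q : Ω × (Fin m → EuclideanSpace ℝ (Fin ℓ)) => Φ d q.2 q.1)
      ((ℙ : Measure Ω).prod ν) :=
    fun d => integrable_of_bdd (hΦmeasJ d).aestronglyMeasurable
      (fun q => (hΦnorm d q.2 q.1).le)
  -- Step A: pointwise representation
  have stepA : ∀ (d : Fin m → EuclideanSpace ℝ (Fin ℓ)) (ω : Ω),
      ∏ i, gammaOf ℓ μ₀ (z ω i + d i) = K ^ m * (∫ ξ, Φ d ξ ω ∂ν).re := by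
    intro d ω
    have h1 : ∀ i : Fin m, gammaOf ℓ μ₀ (z ω i + d i)
        = K * (∫ ξ, Complex.exp (Complex.I * (edot ξ (z ω i + d i) : ℂ)) ∂μ₀).re :=
      fun i => rfl
    simp_rw [h1, Finset.prod_mul_distrib, Finset.prod_const, Finset.card_univ, Fintype.card_fin]
    congr 1
    have h2 : ((∏ i, (∫ ξ, Complex.exp (Complex.I * (edot ξ (z ω i + d i) : ℂ)) ∂μ₀).re : ℝ) : ℂ)
        = ∫ ξ, Φ d ξ ω ∂ν := by
      rw [Complex.ofReal_prod]
      have h3 : ∀ i : Fin m,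
          (((∫ ξ, Complex.exp (Complex.I * (edot ξ (z ω i + d i) : ℂ)) ∂μ₀).re : ℝ) : ℂ)
          = ∫ ξ, Complex.exp (Complex.I * (edot ξ (z ω i + d i) : ℂ)) ∂μ₀ :=
        fun i => J_conj μ₀ hsym _
      simp_rw [h3]
      exact (integral_pi_fintype_prod μ₀
        (fun i a => Complex.exp (Complex.I * (edot a (z ω i + d i) : ℂ)))).symm
    have h4 := congrArg Complex.re h2
    rwa [Complex.ofReal_re] at h4
  -- Step C : per-ξ information via Gaussian characteristic function
  have stepC : ∀ ξ : Fin m → EuclideanSpace ℝ (Fin ℓ),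
      0 ≤ (∫ ω, Φ 0 ξ ω ∂ℙ).re ∧
      (((∫ ω, Φ 0 ξ ω ∂ℙ).re : ℝ) : ℂ) = ∫ ω, Φ 0 ξ ω ∂ℙ ∧
      ‖∫ ω, Φ c ξ ω ∂ℙ‖ = (∫ ω, Φ 0 ξ ω ∂ℙ).re := by
    intro ξ
    set X : Ω → ℝ := fun ω => ∑ i, edot (ξ i) (z ω i) with hX
    have hXmeas : Measurable X := by
      apply Finset.measurable_sum
      intro i _
      exact continuous_edot.measurable.comp (measurable_const.prodMk (hzmeas i))
    have hΦeq : ∀ (d : Fin m → EuclideanSpace ℝ (Fin ℓ)) (ω : Ω),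
        Φ d ξ ω = Complex.exp (Complex.I * ((∑ i, edot (ξ i) (d i) : ℝ) : ℂ))
          * Complex.exp (Complex.I * (X ω : ℂ)) := by
      intro d ω
      simp only [hΦ]
      rw [← Complex.exp_sum, ← Complex.exp_add]
      congr 1
      have h5 : ∀ i : Fin m, (Complex.I * (edot (ξ i) (z ω i + d i) : ℂ))
          = Complex.I * (edot (ξ i) (d i) : ℂ) + Complex.I * (edot (ξ i) (z ω i) : ℂ) := by
        intro i
        rw [edot_add_right]
        push_cast
        ring
      rw [Finset.sum_congr rfl (fun i _ => h5 i), Finset.sum_add_distrib]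
      rw [← Finset.mul_sum, ← Finset.mul_sum, ← Complex.ofReal_sum, ← Complex.ofReal_sum]
    obtain ⟨v, hv⟩ := hGgauss m s hs
      (fun i j => (if j = (p i).1 then ξ i else 0) - (if j = (p i).2 then ξ i else 0))
    have hfeq : (fun ω => ∑ i, ∑ j,
        edot ((if j = (p i).1 then ξ i else 0) - (if j = (p i).2 then ξ i else 0))
          (G (s i) ω j)) = X := by
      funext ω
      rw [hX]
      apply Finset.sum_congr rfl
      intro i _
      simp only [edot_sub_left, edot_ite_left, Finset.sum_sub_distrib,
        Finset.sum_ite_eq', Finset.mem_univ, if_true]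
      exact (edot_sub_right _ _ _).symm
    rw [hfeq] at hv
    have hchar : ∫ ω, Complex.exp (Complex.I * (X ω : ℂ)) ∂ℙ = ((rexp (-(v:ℝ)/2) : ℝ) : ℂ) := by
      have h6 := integral_map (φ := X) (μ := (ℙ : Measure Ω)) hXmeas.aemeasurable
        (f := fun x : ℝ => Complex.exp (Complex.I * (x : ℂ)))
        (Continuous.aestronglyMeasurable (by fun_prop))
      rw [hv, charOne_gaussianReal] at h6
      exact h6.symm
    have hint0 : ∫ ω, Φ 0 ξ ω ∂ℙ = ((rexp (-(v:ℝ)/2) : ℝ) : ℂ) := by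
      have h7 : ∀ ω, Φ 0 ξ ω = Complex.exp (Complex.I * (X ω : ℂ)) := by
        intro ω
        rw [hΦeq 0 ω]
        simp [edot_zero_right]
      simp_rw [h7]
      exact hchar
    have hintc : ∫ ω, Φ c ξ ω ∂ℙ
        = Complex.exp (Complex.I * ((∑ i, edot (ξ i) (c i) : ℝ) : ℂ))
          * ((rexp (-(v:ℝ)/2) : ℝ) : ℂ) := by
      simp_rw [hΦeq c]
      rw [integral_const_mul, hchar]
    refine ⟨?_, ?_, ?_⟩
    · rw [hint0]
      simp only [Complex.ofReal_re]
      positivity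
    · rw [hint0, Complex.ofReal_re]
    · rw [hintc, hint0]
      rw [norm_mul, norm_cexp_I_mul_real, one_mul]
      rw [Complex.ofReal_re, Complex.norm_real, Real.norm_eq_abs,
        _root_.abs_of_nonneg (Real.exp_pos _).le]
  -- Step D : swap and conclude
  have hswap : ∀ d, ∫ ω, (∫ ξ, Φ d ξ ω ∂ν).re ∂ℙ = (∫ ξ, ∫ ω, Φ d ξ ω ∂ℙ ∂ν).re := by
    intro d
    have h1 : Integrable (fun ω => ∫ ξ, Φ d ξ ω ∂ν) (ℙ : Measure Ω) :=
      (hΦint d).integral_prod_left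
    have h9 := integral_re (𝕜 := ℂ) h1
    simp only [RCLike.re_to_complex] at h9
    rw [h9]
    congr 1
    exact integral_integral_swap (f := fun ω ξ => Φ d ξ ω) (hΦint d)
  have hg0int : Integrable (fun ξ => ∫ ω, Φ 0 ξ ω ∂ℙ) ν :=
    (hΦint 0).integral_prod_right
  have hRHS : ∫ ω, ∏ i, gammaOf ℓ μ₀ (z ω i) ∂ℙ
      = K ^ m * (∫ ξ, ∫ ω, Φ 0 ξ ω ∂ℙ ∂ν).re := by
    have h8 : ∀ ω : Ω, ∏ i, gammaOf ℓ μ₀ (z ω i) = K ^ m * (∫ ξ, Φ 0 ξ ω ∂ν).re := by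
      intro ω
      have := stepA 0 ω
      simpa using this
    simp_rw [h8]
    rw [integral_const_mul, hswap 0]
  have hLHS : ∫ ω, ∏ i, gammaOf ℓ μ₀ (z ω i + c i) ∂ℙ
      = K ^ m * (∫ ξ, ∫ ω, Φ c ξ ω ∂ℙ ∂ν).re := by
    simp_rw [stepA c]
    rw [integral_const_mul, hswap c]
  rw [hLHS, hRHS, abs_mul, _root_.abs_of_nonneg (pow_nonneg hK m)]
  apply mul_le_mul_of_nonneg_left _ (pow_nonneg hK m)
  calc |(∫ ξ, ∫ ω, Φ c ξ ω ∂ℙ ∂ν).re|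
      ≤ ‖∫ ξ, ∫ ω, Φ c ξ ω ∂ℙ ∂ν‖ := Complex.abs_re_le_norm _
    _ ≤ ∫ ξ, ‖∫ ω, Φ c ξ ω ∂ℙ‖ ∂ν := norm_integral_le_integral_norm _
    _ = ∫ ξ, (∫ ω, Φ 0 ξ ω ∂ℙ).re ∂ν := by
        apply integral_congr_ae
        exact ae_of_all _ fun ξ => (stepC ξ).2.2
    _ = (∫ ξ, ∫ ω, Φ 0 ξ ω ∂ℙ ∂ν).re := by
        have h10 := integral_re (𝕜 := ℂ) hg0int
        simp only [RCLike.re_to_complex] at h10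
        exact h10

end core

section outer
variable {Ω : Type*} [MeasureSpace Ω]

/-- auxiliary summand. -/
noncomputable def auxH (ℓ n : ℕ) (μ₀ : Measure (EuclideanSpace ℝ (Fin ℓ))) (t b : ℝ)
    (G : ℝ → Ω → Fin n → EuclideanSpace ℝ (Fin ℓ))
    (w : ℝ → Fin n × Fin n → EuclideanSpace ℝ (Fin ℓ))
    (s : ℝ) (q : Fin n × Fin n) (ω : Ω) : ℝ :=
  if q.1 < q.2 ∧ s ∈ Set.Ioc 0 t then
    b * gammaOf ℓ μ₀ (G s ω q.1 - G s ω q.2 + w s q) else 0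

noncomputable def auxF (ℓ n : ℕ) (μ₀ : Measure (EuclideanSpace ℝ (Fin ℓ))) (t b : ℝ)
    (G : ℝ → Ω → Fin n → EuclideanSpace ℝ (Fin ℓ))
    (w : ℝ → Fin n × Fin n → EuclideanSpace ℝ (Fin ℓ)) (s : ℝ) (ω : Ω) : ℝ :=
  ∑ q, auxH ℓ n μ₀ t b G w s q ω

noncomputable def auxS (ℓ n : ℕ) (μ₀ : Measure (EuclideanSpace ℝ (Fin ℓ))) (t b : ℝ)
    (G : ℝ → Ω → Fin n → EuclideanSpace ℝ (Fin ℓ))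
    (w : ℝ → Fin n × Fin n → EuclideanSpace ℝ (Fin ℓ)) (ω : Ω) : ℝ :=
  ∫ x, auxF ℓ n μ₀ t b G w x ω

variable {ℓ n : ℕ} {μ₀ : Measure (EuclideanSpace ℝ (Fin ℓ))} {t b : ℝ}
  {G : ℝ → Ω → Fin n → EuclideanSpace ℝ (Fin ℓ)}
  {w : ℝ → Fin n × Fin n → EuclideanSpace ℝ (Fin ℓ)}

lemma auxH_meas [IsFiniteMeasure μ₀] (hG : Measurable (Function.uncurry G))
    (hw : Measurable w) (q : Fin n × Fin n) :
    Measurable (fun rz : ℝ × Ω => auxH ℓ n μ₀ t b G w rz.1 q rz.2) := by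
  unfold auxH
  have hcond : MeasurableSet {rz : ℝ × Ω | q.1 < q.2 ∧ rz.1 ∈ Set.Ioc 0 t} := by
    by_cases hq : q.1 < q.2
    · simp only [hq, true_and]
      exact measurable_fst measurableSet_Ioc
    · simp only [hq, false_and]
      exact MeasurableSet.empty
  apply Measurable.ite hcond _ measurable_const
  apply Measurable.const_mul
  apply (measurable_gammaOf μ₀).comp
  exact (((measurable_pi_apply q.1).comp hG).sub ((measurable_pi_apply q.2).comp hG)).add
    ((measurable_pi_apply q).comp (hw.comp measurable_fst))

lemma auxH_bound [IsFiniteMeasure μ₀] (s : ℝ) (q : Fin n × Fin n) (ω : Ω) :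
    |auxH ℓ n μ₀ t b G w s q ω| ≤ Set.indicator (Set.Ioc 0 t)
      (fun _ => |b| * (((2 * Real.pi) ^ ℓ)⁻¹ * (μ₀ Set.univ).toReal)) s := by
  have hBb : 0 ≤ |b| * (((2 * Real.pi) ^ ℓ)⁻¹ * (μ₀ Set.univ).toReal) := by positivity
  unfold auxH
  split_ifs with hc
  · rw [Set.indicator_of_mem hc.2, abs_mul]
    exact mul_le_mul_of_nonneg_left (abs_gammaOf_le μ₀ _) (abs_nonneg b)
  · simp only [abs_zero]
    exact Set.indicator_nonneg (fun _ _ => hBb) s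

lemma auxF_meas [IsFiniteMeasure μ₀] (hG : Measurable (Function.uncurry G))
    (hw : Measurable w) :
    Measurable (fun rz : ℝ × Ω => auxF ℓ n μ₀ t b G w rz.1 rz.2) := by
  unfold auxF
  exact Finset.measurable_sum _ (fun q _ => auxH_meas hG hw q)

lemma auxF_bound [IsFiniteMeasure μ₀] (s : ℝ) (ω : Ω) :
    |auxF ℓ n μ₀ t b G w s ω| ≤ Set.indicator (Set.Ioc 0 t)
      (fun _ => (n : ℝ)^2 * (|b| * (((2 * Real.pi) ^ ℓ)⁻¹ * (μ₀ Set.univ).toReal))) s := by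
  set Bb := |b| * (((2 * Real.pi) ^ ℓ)⁻¹ * (μ₀ Set.univ).toReal) with hBbdef
  have hBb : 0 ≤ Bb := by rw [hBbdef]; positivity
  rw [Set.indicator_apply]
  split_ifs with hsI
  · calc |auxF ℓ n μ₀ t b G w s ω| ≤ ∑ q : Fin n × Fin n, |auxH ℓ n μ₀ t b G w s q ω| :=
          Finset.abs_sum_le_sum_abs _ _
      _ ≤ ∑ _q : Fin n × Fin n, Bb := by
          apply Finset.sum_le_sum
          intro q _
          have := auxH_bound (μ₀ := μ₀) (t := t) (b := b) (G := G) (w := w) s q ω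
          rwa [Set.indicator_of_mem hsI] at this
      _ = (n : ℝ)^2 * Bb := by
          rw [Finset.sum_const, Finset.card_univ, Fintype.card_prod, Fintype.card_fin,
            nsmul_eq_mul]
          push_cast
          ring
  · have h0 : auxF ℓ n μ₀ t b G w s ω = 0 := by
      unfold auxF
      apply Finset.sum_eq_zero
      intro q _
      unfold auxH
      exact if_neg (fun hc => hsI hc.2)
    rw [h0, abs_zero]

lemma auxF_integrable [IsFiniteMeasure μ₀] (hG : Measurable (Function.uncurry G))
    (hw : Measurable w) (ω : Ω) :
    Integrable (fun x : ℝ => auxF ℓ n μ₀ t b G w x ω) volume := by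
  apply Integrable.mono'
    ((integrable_indicator_iff measurableSet_Ioc).2
      (integrableOn_const (C := (n : ℝ)^2 * (|b| * (((2 * Real.pi) ^ ℓ)⁻¹ * (μ₀ Set.univ).toReal)))
        measure_Ioc_lt_top.ne))
    (((auxF_meas hG hw).comp (measurable_id.prodMk measurable_const)).aestronglyMeasurable)
  exact ae_of_all _ fun s => by
    rw [Real.norm_eq_abs]
    exact auxF_bound s ω

lemma auxS_meas [IsFiniteMeasure μ₀] (hG : Measurable (Function.uncurry G))
    (hw : Measurable w) : Measurable (auxS ℓ n μ₀ t b G w) := by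
  unfold auxS
  exact (((auxF_meas hG hw).comp measurable_swap).stronglyMeasurable.integral_prod_right').measurable

lemma auxS_bound [IsFiniteMeasure μ₀] (hG : Measurable (Function.uncurry G))
    (hw : Measurable w) (ω : Ω) :
    |auxS ℓ n μ₀ t b G w ω| ≤
      ((n : ℝ)^2 * (|b| * (((2 * Real.pi) ^ ℓ)⁻¹ * (μ₀ Set.univ).toReal)))
        * (volume (Set.Ioc (0:ℝ) t)).toReal := by
  set CC := (n : ℝ)^2 * (|b| * (((2 * Real.pi) ^ ℓ)⁻¹ * (μ₀ Set.univ).toReal)) with hCC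
  unfold auxS
  calc |∫ x, auxF ℓ n μ₀ t b G w x ω| ≤ ∫ x, |auxF ℓ n μ₀ t b G w x ω| := by
        simpa [Real.norm_eq_abs] using
          norm_integral_le_integral_norm (μ := volume) (fun x => auxF ℓ n μ₀ t b G w x ω)
    _ ≤ ∫ x, Set.indicator (Set.Ioc 0 t) (fun _ => CC) x := by
        apply integral_mono ((auxF_integrable hG hw ω).abs)
          ((integrable_indicator_iff measurableSet_Ioc).2
            (integrableOn_const measure_Ioc_lt_top.ne))
        exact fun s => auxF_bound s ω
    _ = (volume (Set.Ioc (0:ℝ) t)).toReal • CC := integral_indicator_const _ measurableSet_Ioc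
    _ = CC * (volume (Set.Ioc (0:ℝ) t)).toReal := by rw [smul_eq_mul, mul_comm]

end outer

section moment
variable {Ω : Type*} [MeasureSpace Ω] [IsProbabilityMeasure (ℙ : Measure Ω)]

lemma moment_le (ℓ n : ℕ) (μ₀ : Measure (EuclideanSpace ℝ (Fin ℓ)))
    [IsFiniteMeasure μ₀] (hsym : SymmetricMeasure μ₀) (t : ℝ)
    (G : ℝ → Ω → Fin n → EuclideanSpace ℝ (Fin ℓ))
    (hGmeas : Measurable (Function.uncurry G))
    (hGgauss : ∀ (m : ℕ) (ts : Fin m → ℝ), (∀ i, ts i ∈ Set.Icc 0 t) →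
      ∀ v : Fin m → Fin n → EuclideanSpace ℝ (Fin ℓ),
        ∃ σ : NNReal,
          Measure.map (fun ω => ∑ i, ∑ j, edot (v i j) (G (ts i) ω j)) ℙ =
            gaussianReal 0 σ)
    (y : ℝ → Fin n × Fin n → EuclideanSpace ℝ (Fin ℓ)) (hy : Measurable y)
    (a : ℝ) (m : ℕ) :
    ∫ ω, (auxS ℓ n μ₀ t a G y ω) ^ m ∂ℙ
      ≤ ∫ ω, (auxS ℓ n μ₀ t |a| G (fun _ _ => 0) ω) ^ m ∂ℙ := by
  classical
  -- the master decomposition, for a generic parameter pair (b, w)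
  have master : ∀ (b : ℝ) (w : ℝ → Fin n × Fin n → EuclideanSpace ℝ (Fin ℓ)),
      Measurable w →
      (∫ ω, (auxS ℓ n μ₀ t b G w ω) ^ m ∂ℙ
        = ∑ P : Fin m → Fin n × Fin n, ∫ x : Fin m → ℝ,
            (∫ ω, ∏ i, auxH ℓ n μ₀ t b G w (x i) (P i) ω ∂ℙ) ∂volume)
      ∧ (∀ P : Fin m → Fin n × Fin n, Integrable (fun x : Fin m → ℝ =>
            ∫ ω, ∏ i, auxH ℓ n μ₀ t b G w (x i) (P i) ω ∂ℙ) volume) := by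
    intro b w hw
    set Bb := |b| * (((2 * Real.pi) ^ ℓ)⁻¹ * (μ₀ Set.univ).toReal) with hBbdef
    have hBb : 0 ≤ Bb := by rw [hBbdef]; positivity
    -- the integrable product bound on (Fin m → ℝ)
    set g : (Fin m → ℝ) → ℝ :=
      fun x => ∏ i, Set.indicator (Set.Ioc 0 t) (fun _ => Bb) (x i) with hg
    have hone : Integrable (Set.indicator (Set.Ioc 0 t) (fun _ => Bb)) volume :=
      (integrable_indicator_iff measurableSet_Ioc).2
        (integrableOn_const measure_Ioc_lt_top.ne)
    have hgint : Integrable g volume := Integrable.fintype_prod (𝕜 := ℝ) (fun _ => hone)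
    have hgnn : ∀ x, 0 ≤ g x := by
      intro x
      apply Finset.prod_nonneg
      intro i _
      exact Set.indicator_nonneg (fun _ _ => hBb) _
    have hprod_bound : ∀ (P : Fin m → Fin n × Fin n) (ω : Ω) (x : Fin m → ℝ),
        |∏ i, auxH ℓ n μ₀ t b G w (x i) (P i) ω| ≤ g x := by
      intro P ω x
      rw [Finset.abs_prod]
      apply Finset.prod_le_prod (fun i _ => abs_nonneg _)
      intro i _
      exact auxH_bound (x i) (P i) ω
    -- joint measurability
    have hjm : ∀ P : Fin m → Fin n × Fin n,
        Measurable (fun q : Ω × (Fin m → ℝ) => ∏ i, auxH ℓ n μ₀ t b G w (q.2 i) (P i) q.1) := by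
      intro P
      apply Finset.measurable_prod
      intro i _
      have hmap : Measurable (fun q : Ω × (Fin m → ℝ) => ((q.2 i, q.1) : ℝ × Ω)) :=
        ((measurable_pi_apply i).comp measurable_snd).prodMk measurable_fst
      exact (auxH_meas hGmeas hw (P i)).comp hmap
    -- integrability in x for each ω
    have hint_x : ∀ (P : Fin m → Fin n × Fin n) (ω : Ω),
        Integrable (fun x : Fin m → ℝ => ∏ i, auxH ℓ n μ₀ t b G w (x i) (P i) ω) volume := by
      intro P ω
      apply Integrable.mono' hgint
        (((hjm P).comp (measurable_const.prodMk measurable_id)).aestronglyMeasurable)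
      exact ae_of_all _ fun x => by
        rw [Real.norm_eq_abs]
        exact hprod_bound P ω x
    -- integrability on the product space
    have hprod_int : ∀ P : Fin m → Fin n × Fin n,
        Integrable (fun q : Ω × (Fin m → ℝ) => ∏ i, auxH ℓ n μ₀ t b G w (q.2 i) (P i) q.1)
          ((ℙ : Measure Ω).prod (volume : Measure (Fin m → ℝ))) := by
      intro P
      rw [integrable_prod_iff (hjm P).aestronglyMeasurable]
      constructor
      · exact ae_of_all _ fun ω => hint_x P ω
      · -- the function ω ↦ ∫ x, ‖∏ ...‖ is bounded by ∫ g
        have hb1 : ∀ ω : Ω, (∫ x : Fin m → ℝ, ‖∏ i, auxH ℓ n μ₀ t b G w (x i) (P i) ω‖)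
            ≤ ∫ x, g x := by
          intro ω
          apply integral_mono (hint_x P ω).norm hgint
          intro x
          simpa [Real.norm_eq_abs, Finset.abs_prod] using hprod_bound P ω x
        apply integrable_of_bdd (C := ∫ x, g x)
        · exact (((hjm P).norm).stronglyMeasurable.integral_prod_right').measurable.aestronglyMeasurable
        · intro ω
          rw [Real.norm_eq_abs, _root_.abs_of_nonneg (integral_nonneg (fun x => norm_nonneg _))]
          exact hb1 ω
    constructor
    · -- the decomposition of the m-th moment
      have hpow : ∀ ω, (auxS ℓ n μ₀ t b G w ω) ^ m
          = ∫ x : Fin m → ℝ, ∏ i, auxF ℓ n μ₀ t b G w (x i) ω := by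
        intro ω
        have h1 := MeasureTheory.integral_fintype_prod_eq_pow (𝕜 := ℝ) (ι := Fin m) (μ := volume)
          (fun u => auxF ℓ n μ₀ t b G w u ω)
        rw [Fintype.card_fin] at h1
        exact h1.symm
      have hexp : ∀ (ω : Ω) (x : Fin m → ℝ), ∏ i, auxF ℓ n μ₀ t b G w (x i) ω
          = ∑ P : Fin m → Fin n × Fin n, ∏ i, auxH ℓ n μ₀ t b G w (x i) (P i) ω := by
        intro ω x
        unfold auxF
        rw [Finset.prod_univ_sum]
        rw [Fintype.piFinset_univ]
      calc ∫ ω, (auxS ℓ n μ₀ t b G w ω) ^ m ∂ℙ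
          = ∫ ω, ∫ x : Fin m → ℝ,
              (∑ P : Fin m → Fin n × Fin n, ∏ i, auxH ℓ n μ₀ t b G w (x i) (P i) ω) ∂volume ∂ℙ := by
            simp_rw [hpow, hexp]
        _ = ∫ ω, (∑ P : Fin m → Fin n × Fin n,
              ∫ x : Fin m → ℝ, ∏ i, auxH ℓ n μ₀ t b G w (x i) (P i) ω ∂volume) ∂ℙ := by
            apply integral_congr_ae
            apply ae_of_all
            intro ω
            exact integral_finset_sum _ (fun P _ => hint_x P ω)
        _ = ∑ P : Fin m → Fin n × Fin n,
              ∫ ω, (∫ x : Fin m → ℝ, ∏ i, auxH ℓ n μ₀ t b G w (x i) (P i) ω ∂volume) ∂ℙ := by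
            exact integral_finset_sum _ (fun P _ => (hprod_int P).integral_prod_left)
        _ = ∑ P : Fin m → Fin n × Fin n, ∫ x : Fin m → ℝ,
              (∫ ω, ∏ i, auxH ℓ n μ₀ t b G w (x i) (P i) ω ∂ℙ) ∂volume := by
            apply Finset.sum_congr rfl
            intro P _
            exact integral_integral_swap (hprod_int P)
    · exact fun P => (hprod_int P).integral_prod_right
  obtain ⟨hdec, hint⟩ := master a y hy
  obtain ⟨hdec', hint'⟩ := master |a| (fun _ _ => 0) measurable_const
  rw [hdec, hdec']
  apply Finset.sum_le_sum
  intro P _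
  apply integral_mono (hint P) (hint' P)
  intro x
  show (∫ ω, ∏ i, auxH ℓ n μ₀ t a G y (x i) (P i) ω ∂ℙ)
      ≤ ∫ ω, ∏ i, auxH ℓ n μ₀ t |a| G (fun _ _ => 0) (x i) (P i) ω ∂ℙ
  -- pointwise comparison of the Ω-integrals
  by_cases hc : ∀ i : Fin m, (P i).1 < (P i).2 ∧ x i ∈ Set.Ioc 0 t
  · -- all factors active
    have hx : ∀ i, x i ∈ Set.Icc 0 t := fun i => ⟨(hc i).2.1.le, (hc i).2.2⟩
    have e1 : (∫ ω, ∏ i, auxH ℓ n μ₀ t a G y (x i) (P i) ω ∂ℙ)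
        = a ^ m * ∫ ω, ∏ i, gammaOf ℓ μ₀
            (G (x i) ω (P i).1 - G (x i) ω (P i).2 + y (x i) (P i)) ∂ℙ := by
      rw [← integral_const_mul]
      have hfun : (fun ω => ∏ i, auxH ℓ n μ₀ t a G y (x i) (P i) ω)
          = fun ω => a ^ m * ∏ i, gammaOf ℓ μ₀
              (G (x i) ω (P i).1 - G (x i) ω (P i).2 + y (x i) (P i)) := by
        funext ω
        have h2 : ∀ i ∈ Finset.univ, auxH ℓ n μ₀ t a G y (x i) (P i) ω
            = a * gammaOf ℓ μ₀ (G (x i) ω (P i).1 - G (x i) ω (P i).2 + y (x i) (P i)) := by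
          intro i _
          unfold auxH
          exact if_pos (hc i)
        rw [Finset.prod_congr rfl h2, Finset.prod_mul_distrib, Finset.prod_const,
          Finset.card_univ, Fintype.card_fin]
      rw [hfun]
    have e2 : (∫ ω, ∏ i, auxH ℓ n μ₀ t |a| G (fun _ _ => 0) (x i) (P i) ω ∂ℙ)
        = |a| ^ m * ∫ ω, ∏ i, gammaOf ℓ μ₀
            (G (x i) ω (P i).1 - G (x i) ω (P i).2) ∂ℙ := by
      rw [← integral_const_mul]
      have hfun : (fun ω => ∏ i, auxH ℓ n μ₀ t |a| G (fun _ _ => 0) (x i) (P i) ω)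
          = fun ω => |a| ^ m * ∏ i, gammaOf ℓ μ₀
              (G (x i) ω (P i).1 - G (x i) ω (P i).2) := by
        funext ω
        have h2 : ∀ i ∈ Finset.univ, auxH ℓ n μ₀ t |a| G (fun _ _ => 0) (x i) (P i) ω
            = |a| * gammaOf ℓ μ₀ (G (x i) ω (P i).1 - G (x i) ω (P i).2) := by
          intro i _
          unfold auxH
          rw [if_pos (hc i), add_zero]
        rw [Finset.prod_congr rfl h2, Finset.prod_mul_distrib, Finset.prod_const,
          Finset.card_univ, Fintype.card_fin]
      rw [hfun]
    rw [e1, e2]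
    have hcore := core_ineq ℓ n μ₀ hsym t G hGmeas hGgauss m (fun i => x i) hx P
      (fun i => y (x i) (P i))
    calc a ^ m * ∫ ω, ∏ i, gammaOf ℓ μ₀
            (G (x i) ω (P i).1 - G (x i) ω (P i).2 + y (x i) (P i)) ∂ℙ
        ≤ |a ^ m * ∫ ω, ∏ i, gammaOf ℓ μ₀
            (G (x i) ω (P i).1 - G (x i) ω (P i).2 + y (x i) (P i)) ∂ℙ| := le_abs_self _
      _ = |a| ^ m * |∫ ω, ∏ i, gammaOf ℓ μ₀
            (G (x i) ω (P i).1 - G (x i) ω (P i).2 + y (x i) (P i)) ∂ℙ| := by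
          rw [abs_mul, _root_.abs_pow]
      _ ≤ |a| ^ m * ∫ ω, ∏ i, gammaOf ℓ μ₀
            (G (x i) ω (P i).1 - G (x i) ω (P i).2) ∂ℙ := by
          exact mul_le_mul_of_nonneg_left hcore (pow_nonneg (abs_nonneg a) m)
  · -- some factor is identically zero on both sides
    push_neg at hc
    obtain ⟨i0, hi0⟩ := hc
    have z1 : ∀ ω, ∏ i, auxH ℓ n μ₀ t a G y (x i) (P i) ω = 0 := by
      intro ω
      apply Finset.prod_eq_zero (Finset.mem_univ i0)
      unfold auxH
      exact if_neg (fun hcc => hi0 hcc.1 hcc.2)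
    have z2 : ∀ ω, ∏ i, auxH ℓ n μ₀ t |a| G (fun _ _ => 0) (x i) (P i) ω = 0 := by
      intro ω
      apply Finset.prod_eq_zero (Finset.mem_univ i0)
      unfold auxH
      exact if_neg (fun hcc => hi0 hcc.1 hcc.2)
    simp only [z1, z2, integral_zero]
    exact le_refl 0

end moment

section series
variable {Ω : Type*} [MeasureSpace Ω] [IsProbabilityMeasure (ℙ : Measure Ω)]

lemma exp_integral_eq (T : Ω → ℝ) (hT : Measurable T) (M : ℝ) (hM : 0 ≤ M)
    (hbT : ∀ ω, |T ω| ≤ M) :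
    ∫ ω, Real.exp (T ω) ∂ℙ = ∑' k : ℕ, ∫ ω, T ω ^ k / (k.factorial : ℝ) ∂ℙ := by
  have h1 : ∀ ω, Real.exp (T ω) = ∑' k : ℕ, T ω ^ k / (k.factorial : ℝ) := by
    intro ω
    rw [Real.exp_eq_exp_ℝ, NormedSpace.exp_eq_tsum_div]
  simp_rw [h1]
  rw [integral_tsum]
  · intro k
    exact ((hT.pow_const k).div_const _).aestronglyMeasurable
  · have hbd : ∀ k : ℕ, (∫⁻ ω, ‖T ω ^ k / (k.factorial : ℝ)‖₊ ∂ℙ)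
        ≤ ENNReal.ofReal (M ^ k / (k.factorial : ℝ)) := by
      intro k
      have hpt : ∀ ω, (‖T ω ^ k / (k.factorial : ℝ)‖₊ : ℝ≥0∞)
          ≤ ENNReal.ofReal (M ^ k / (k.factorial : ℝ)) := by
        intro ω
        rw [← enorm_eq_nnnorm, ← ofReal_norm_eq_enorm]
        apply ENNReal.ofReal_le_ofReal
        rw [Real.norm_eq_abs, abs_div, _root_.abs_pow,
          _root_.abs_of_nonneg (by positivity : (0:ℝ) ≤ (k.factorial : ℝ))]
        gcongr
        exact hbT ω
      calc (∫⁻ ω, ‖T ω ^ k / (k.factorial : ℝ)‖₊ ∂ℙ)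
          ≤ ∫⁻ _ω, ENNReal.ofReal (M ^ k / (k.factorial : ℝ)) ∂ℙ := lintegral_mono hpt
        _ = ENNReal.ofReal (M ^ k / (k.factorial : ℝ)) := by
            rw [lintegral_const, measure_univ, mul_one]
    have hsum2 : (∑' k : ℕ, ENNReal.ofReal (M ^ k / (k.factorial : ℝ)))
        = ENNReal.ofReal (∑' k : ℕ, M ^ k / (k.factorial : ℝ)) :=
      (ENNReal.ofReal_tsum_of_nonneg (fun k => by positivity)
        (Real.summable_pow_div_factorial M)).symm
    have : (∑' k : ℕ, ∫⁻ ω, ‖T ω ^ k / (k.factorial : ℝ)‖₊ ∂ℙ)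
        ≤ ENNReal.ofReal (∑' k : ℕ, M ^ k / (k.factorial : ℝ)) := by
      rw [← hsum2]
      exact ENNReal.tsum_le_tsum hbd
    exact (lt_of_le_of_lt this ENNReal.ofReal_lt_top).ne

lemma series_le (S S' : Ω → ℝ) (hSm : Measurable S) (hS'm : Measurable S')
    (M : ℝ) (hM : 0 ≤ M) (hbS : ∀ ω, |S ω| ≤ M) (hbS' : ∀ ω, |S' ω| ≤ M)
    (hmom : ∀ m : ℕ, ∫ ω, S ω ^ m ∂ℙ ≤ ∫ ω, S' ω ^ m ∂ℙ) :
    ∫⁻ ω, ENNReal.ofReal (Real.exp (S ω)) ∂ℙ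
      ≤ ∫⁻ ω, ENNReal.ofReal (Real.exp (S' ω)) ∂ℙ := by
  have hsum : ∀ T : Ω → ℝ, Measurable T → (∀ ω, |T ω| ≤ M) →
      Summable (fun k : ℕ => ∫ ω, T ω ^ k / (k.factorial : ℝ) ∂ℙ) := by
    intro T hT hb
    apply Summable.of_norm_bounded (Real.summable_pow_div_factorial M)
    intro k
    have h2 : ∀ ω, ‖T ω ^ k / (k.factorial : ℝ)‖ ≤ M ^ k / (k.factorial : ℝ) := by
      intro ω
      rw [Real.norm_eq_abs, abs_div, _root_.abs_pow,
        _root_.abs_of_nonneg (by positivity : (0:ℝ) ≤ (k.factorial : ℝ))]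
      gcongr
      exact hb ω
    calc ‖∫ ω, T ω ^ k / (k.factorial : ℝ) ∂ℙ‖
        ≤ (M ^ k / (k.factorial : ℝ)) * ((ℙ : Measure Ω) Set.univ).toReal :=
          by simpa using norm_integral_le_of_norm_le_const (μ := (ℙ : Measure Ω)) (ae_of_all _ h2)
      _ = M ^ k / (k.factorial : ℝ) := by rw [measure_univ, ENNReal.toReal_one, mul_one]
  have hint : ∀ T : Ω → ℝ, Measurable T → (∀ ω, |T ω| ≤ M) →
      Integrable (fun ω => Real.exp (T ω)) (ℙ : Measure Ω) := by
    intro T hT hb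
    apply integrable_of_bdd (C := Real.exp M)
      (Real.measurable_exp.comp hT).aestronglyMeasurable
    intro ω
    simpa [Real.norm_eq_abs, Real.abs_exp] using
      Real.exp_le_exp.2 (le_trans (le_abs_self _) (hb ω))
  rw [← ofReal_integral_eq_lintegral_ofReal (hint S hSm hbS)
      (ae_of_all _ fun ω => (Real.exp_pos _).le),
    ← ofReal_integral_eq_lintegral_ofReal (hint S' hS'm hbS')
      (ae_of_all _ fun ω => (Real.exp_pos _).le)]
  apply ENNReal.ofReal_le_ofReal
  rw [exp_integral_eq S hSm M hM hbS, exp_integral_eq S' hS'm M hM hbS']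
  apply Summable.tsum_le_tsum _ (hsum S hSm hbS) (hsum S' hS'm hbS')
  intro k
  rw [integral_div, integral_div]
  exact div_le_div_of_nonneg_right (hmom k) (by positivity)

end series


end AuxProofs

/-- Lemma 4.1: shifting a centered Gaussian process inside a positive-definite covariance
can only decrease exponential moments. Expectations are taken in `[0,∞]`. -/
theorem gamma_shift_inequality
    {Ω : Type*} [MeasureSpace Ω] [IsProbabilityMeasure (ℙ : Measure Ω)]
    (ℓ n : ℕ) (hn : 2 ≤ n) (μ₀ : Measure (EuclideanSpace ℝ (Fin ℓ)))
    [IsFiniteMeasure μ₀] (hsym : SymmetricMeasure μ₀)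
    (t : ℝ) (ht : 0 < t)
    (G : ℝ → Ω → Fin n → EuclideanSpace ℝ (Fin ℓ))
    (hGmeas : Measurable (Function.uncurry G))
    (hGgauss : ∀ (m : ℕ) (ts : Fin m → ℝ), (∀ i, ts i ∈ Set.Icc 0 t) →
      ∀ v : Fin m → Fin n → EuclideanSpace ℝ (Fin ℓ),
        ∃ σ : NNReal,
          Measure.map (fun ω => ∑ i, ∑ j, edot (v i j) (G (ts i) ω j)) ℙ =
            gaussianReal 0 σ)
    (y : ℝ → Fin n × Fin n → EuclideanSpace ℝ (Fin ℓ)) (hy : Measurable y)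
    (a : ℝ) :
    (∫⁻ ω, ENNReal.ofReal (Real.exp (∫ s in Set.Ioc 0 t,
        ∑ j, ∑ k, if j < k then
          a * gammaOf ℓ μ₀ (G s ω j - G s ω k + y s (j, k)) else 0)) ∂ℙ)
      ≤ ∫⁻ ω, ENNReal.ofReal (Real.exp (∫ s in Set.Ioc 0 t,
        ∑ j, ∑ k, if j < k then
          |a| * gammaOf ℓ μ₀ (G s ω j - G s ω k) else 0)) ∂ℙ := by

  classical
  have hb1 : ∀ ω : Ω, (∫ s in Set.Ioc 0 t,
      ∑ j, ∑ k, if j < k then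
        a * gammaOf ℓ μ₀ (G s ω j - G s ω k + y s (j, k)) else 0)
      = auxS ℓ n μ₀ t a G y ω := by
    intro ω
    unfold auxS
    rw [← integral_indicator measurableSet_Ioc]
    apply integral_congr_ae
    apply ae_of_all
    intro s
    rw [Set.indicator_apply]
    unfold auxF auxH
    beta_reduce
    split_ifs with hsI
    · rw [Fintype.sum_prod_type]
      apply Finset.sum_congr rfl
      intro j _
      apply Finset.sum_congr rfl
      intro k _
      by_cases hjk : j < k
      · rw [if_pos hjk, if_pos (show (j, k).1 < (j, k).2 ∧ s ∈ Set.Ioc 0 t from ⟨hjk, hsI⟩)]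
      · rw [if_neg hjk, if_neg (fun hcc => hjk hcc.1)]
    · symm
      apply Finset.sum_eq_zero
      intro q _
      exact if_neg (fun hcc => hsI hcc.2)
  have hb2 : ∀ ω : Ω, (∫ s in Set.Ioc 0 t,
      ∑ j, ∑ k, if j < k then
        |a| * gammaOf ℓ μ₀ (G s ω j - G s ω k) else 0)
      = auxS ℓ n μ₀ t |a| G (fun _ _ => 0) ω := by
    intro ω
    unfold auxS
    rw [← integral_indicator measurableSet_Ioc]
    apply integral_congr_ae
    apply ae_of_all
    intro s
    rw [Set.indicator_apply]
    unfold auxF auxH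
    beta_reduce
    split_ifs with hsI
    · rw [Fintype.sum_prod_type]
      apply Finset.sum_congr rfl
      intro j _
      apply Finset.sum_congr rfl
      intro k _
      by_cases hjk : j < k
      · rw [if_pos hjk, if_pos (show (j, k).1 < (j, k).2 ∧ s ∈ Set.Ioc 0 t from ⟨hjk, hsI⟩),
          add_zero]
      · rw [if_neg hjk, if_neg (fun hcc => hjk hcc.1)]
    · symm
      apply Finset.sum_eq_zero
      intro q _
      exact if_neg (fun hcc => hsI hcc.2)
  simp_rw [hb1, hb2]
  set M : ℝ := ((n : ℝ)^2 * (|a| * (((2 * Real.pi) ^ ℓ)⁻¹ * (μ₀ Set.univ).toReal)))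
    * (volume (Set.Ioc (0:ℝ) t)).toReal with hMdef
  have hM : 0 ≤ M := by
    rw [hMdef]
    have := ENNReal.toReal_nonneg (a := μ₀ Set.univ)
    have := ENNReal.toReal_nonneg (a := volume (Set.Ioc (0:ℝ) t))
    positivity
  apply series_le (auxS ℓ n μ₀ t a G y)
    (auxS ℓ n μ₀ t |a| G (fun _ _ => 0))
    (auxS_meas (μ₀ := μ₀) (t := t) (b := a) (w := y) hGmeas hy)
    (auxS_meas (μ₀ := μ₀) (t := t) (b := |a|)
      (w := fun _ _ => (0 : EuclideanSpace ℝ (Fin ℓ))) hGmeas measurable_const) M hM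
  · exact fun ω => auxS_bound (μ₀ := μ₀) (t := t) (b := a) (w := y) hGmeas hy ω
  · intro ω
    have h9 := auxS_bound (μ₀ := μ₀) (t := t) (b := |a|)
      (w := fun _ _ => (0 : EuclideanSpace ℝ (Fin ℓ))) hGmeas measurable_const ω
    rwa [_root_.abs_abs] at h9
  · exact fun m => moment_le ℓ n μ₀ hsym t G hGmeas hGgauss y hy a m


end
end

section
/- Let ℓ ≥ 1 and n ≥ 1 be integers, let M > 0 and α, β > 0, set ᾱ := (α, 0, …, 0) ∈ ℝ^ℓ, and define A_M^+ := {(y^1, …, y^n) ∈ ([0,∞)^ℓ)^n : |y^j − y^k| ≤ M for all 1 ≤ j < k ≤ n}. Then lim_{t→∞} (1/t) log ∫_{A_M^+} exp{ −Σ_{j=1}^n ( |y^j − ᾱ t|²/(2t) + β |y^j| ) } dy equals nβ²/2 − nβα if α > β, and equals −nα²/2 if α ≤ β. -/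
open MeasureTheory ProbabilityTheory Filter Topology
open scoped ENNReal NNReal

noncomputable section

variable {Ω : Type*} [MeasureSpace Ω]

open Real

private lemma aux_abs_coord_le_norm {ℓ : ℕ} (x : EuclideanSpace ℝ (Fin ℓ)) (q : Fin ℓ) :
    |x q| ≤ ‖x‖ := by
  rw [EuclideanSpace.norm_eq, ← Real.sqrt_sq_eq_abs]
  apply Real.sqrt_le_sqrt
  simp_rw [Real.norm_eq_abs, sq_abs]
  exact Finset.single_le_sum (f := fun i => x i ^ 2) (fun i _ => sq_nonneg _) (Finset.mem_univ q)

private lemma aux_integrable_gauss {ℓ : ℕ} {t : ℝ} (ht : 0 < t) :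
    Integrable (fun x : EuclideanSpace ℝ (Fin ℓ) => Real.exp (-(1/(2*t)) * ‖x‖^2)) := by
  have h := GaussianFourier.integrable_cexp_neg_mul_sq_norm_add (b := (1/(2*t) : ℂ))
      (by norm_num; positivity) 0 (0 : EuclideanSpace ℝ (Fin ℓ))
  refine h.norm.congr (Filter.Eventually.of_forall fun x => ?_)
  simp only [Complex.norm_exp]
  norm_num
  left
  norm_cast

private lemma aux_integral_gauss {ℓ : ℕ} {t : ℝ} (ht : 0 < t) :
    ∫ x : EuclideanSpace ℝ (Fin ℓ), Real.exp (-(1/(2*t)) * ‖x‖^2)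
      = (π * (2*t)) ^ ((ℓ:ℝ)/2) := by
  rw [GaussianFourier.integral_rexp_neg_mul_sq_norm (by positivity)]
  rw [finrank_euclideanSpace_fin]
  congr 1
  field_simp

/-- The exponent function. -/
private def gfun {ℓ : ℕ} (i0 : Fin ℓ) (α β t : ℝ) (x : EuclideanSpace ℝ (Fin ℓ)) : ℝ :=
  ‖x - EuclideanSpace.single i0 (α * t)‖ ^ 2 / (2 * t) + β * ‖x‖

set_option maxHeartbeats 1000000 in
/-- Lemma "ldev": Laplace-type asymptotics of the Gaussian-weighted integral over the
positive diagonal strip `A_M^+`. -/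
theorem laplace_asymptotics_strip
    (ℓ n : ℕ) (hℓ : 0 < ℓ) (hn : 0 < n) (M α β : ℝ)
    (hM : 0 < M) (hα : 0 < α) (hβ : 0 < β) :
    Tendsto (fun t : ℝ => (1 / t) * Real.log
        (∫ y in {y : Fin n → EuclideanSpace ℝ (Fin ℓ) |
            (∀ j q, 0 ≤ y j q) ∧ ∀ j k : Fin n, j < k → ‖y j - y k‖ ≤ M},
          Real.exp (-(∑ j : Fin n,
            (‖y j - EuclideanSpace.single (⟨0, hℓ⟩ : Fin ℓ) (α * t)‖ ^ 2 / (2 * t)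
              + β * ‖y j‖)))))
      atTop
      (𝓝 (if β < α then n * β ^ 2 / 2 - n * β * α else -(n * α ^ 2 / 2))) := by

  classical
  set i0 : Fin ℓ := ⟨0, hℓ⟩ with hi0
  obtain ⟨s, hs_def⟩ : ∃ v : ℝ, v = max (α - β) 0 := ⟨_, rfl⟩
  obtain ⟨ρ, hρ_def⟩ : ∃ v : ℝ, v = (s - α)^2/2 + β * s := ⟨_, rfl⟩
  have hs0 : 0 ≤ s := hs_def ▸ le_max_right _ _
  have hsα : s ≤ α := hs_def ▸ max_le (by linarith) hα.le
  have h1 : 0 ≤ s + β - α := by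
    have : α - β ≤ s := hs_def ▸ le_max_left _ _
    linarith
  have h2 : s * (α - β - s) = 0 := by
    rcases le_total (α - β) 0 with h | h
    · rw [hs_def, max_eq_right h, zero_mul]
    · rw [hs_def, max_eq_left h]; ring
  have htarget : (if β < α then (n:ℝ) * β ^ 2 / 2 - (n:ℝ) * β * α else -((n:ℝ) * α ^ 2 / 2))
      = -((n:ℝ) * ρ) := by
    rw [hρ_def, hs_def]
    split_ifs with h
    · rw [max_eq_left (by linarith)]; ring
    · rw [max_eq_right (by linarith [not_lt.mp h])]; ring
  rw [htarget]
  set S : Set (Fin n → EuclideanSpace ℝ (Fin ℓ)) :=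
    {y | (∀ j q, 0 ≤ y j q) ∧ ∀ j k : Fin n, j < k → ‖y j - y k‖ ≤ M} with hS_def
  obtain ⟨δ, hδ_def⟩ : ∃ v : ℝ, v = min M 1 / 2 := ⟨_, rfl⟩
  have hδ0 : 0 < δ := hδ_def ▸ div_pos (lt_min hM one_pos) two_pos
  have hδM : 2*δ ≤ M := by have := min_le_left M 1; rw [hδ_def]; linarith
  have hδ1 : δ ≤ 1 := by have := min_le_right M 1; rw [hδ_def]; linarith
  obtain ⟨c, hc_app⟩ : ∃ c : EuclideanSpace ℝ (Fin ℓ), ∀ q, c q = δ :=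
    ⟨(WithLp.equiv 2 _).symm (fun _ => δ), fun _ => rfl⟩
  have hc_norm : ‖c‖ ≤ Real.sqrt ℓ * δ := by
    rw [EuclideanSpace.norm_eq]
    have h : ∑ q : Fin ℓ, ‖c q‖^2 = (ℓ:ℝ) * δ^2 := by
      simp [hc_app, Real.norm_eq_abs, sq_abs, Finset.sum_const, Finset.card_univ]
    rw [h, show (ℓ:ℝ) * δ^2 = (Real.sqrt ℓ * δ)^2 by
      rw [mul_pow, Real.sq_sqrt (Nat.cast_nonneg ℓ)], Real.sqrt_sq (by positivity)]
  obtain ⟨R, hR_def⟩ : ∃ v : ℝ, v = Real.sqrt ℓ * δ + δ := ⟨_, rfl⟩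
  have hR0 : 0 ≤ R := by rw [hR_def]; positivity
  obtain ⟨C, hC_def⟩ : ∃ v : ℝ, v = α*R + R^2/2 + β*R := ⟨_, rfl⟩
  obtain ⟨b, hb_def⟩ : ∃ b : EuclideanSpace ℝ (Fin ℓ), b = EuclideanSpace.single i0 s :=
    ⟨_, rfl⟩
  have hsmul_single : ∀ t u : ℝ,
      t • (EuclideanSpace.single i0 u : EuclideanSpace ℝ (Fin ℓ))
        = EuclideanSpace.single i0 (t*u) := by
    intro t u
    ext q
    simp [EuclideanSpace.single_apply, mul_ite, mul_zero]
  obtain ⟨z, hz_def⟩ : ∃ z : ℝ → EuclideanSpace ℝ (Fin ℓ), ∀ t, z t = t • b + c :=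
    ⟨_, fun _ => rfl⟩
  -- key pointwise lower bound on the exponent
  have key1 : ∀ t : ℝ, 0 < t → ∀ x : EuclideanSpace ℝ (Fin ℓ), (∀ q, 0 ≤ x q) →
      t*ρ + (1/(2*t)) * ‖x - t•b‖^2 ≤ gfun i0 α β t x := by
    intro t ht x hx
    have h2t : (0:ℝ) < 2*t := by linarith
    have hA : ‖x - EuclideanSpace.single i0 (α * t)‖^2
        = ‖x‖^2 - 2*((α*t) * x i0) + (α*t)^2 := by
      rw [@norm_sub_sq_real, EuclideanSpace.inner_single_right, EuclideanSpace.norm_single]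
      simp [Real.norm_eq_abs, ← abs_mul, sq_abs]
    have hB : ‖x - t•b‖^2 = ‖x‖^2 - 2*((t*s) * x i0) + (t*s)^2 := by
      rw [hb_def, hsmul_single, @norm_sub_sq_real, EuclideanSpace.inner_single_right,
        EuclideanSpace.norm_single]
      simp [Real.norm_eq_abs, ← abs_mul, sq_abs]
    have hx0 : 0 ≤ x i0 := hx i0
    have hβx : β * x i0 ≤ β * ‖x‖ :=
      mul_le_mul_of_nonneg_left ((le_abs_self _).trans (aux_abs_coord_le_norm x i0)) hβ.le
    have hkey : 0 ≤ 2*t*(x i0)*(s + β - α) + 2*t^2*(s*(α - β - s))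
        + 2*t*(β*‖x‖ - β*(x i0)) := by
      have t1 : 0 ≤ 2*t*(x i0)*(s+β-α) :=
        mul_nonneg (mul_nonneg (by linarith) hx0) h1
      have t2 : 0 ≤ 2*t*(β*‖x‖ - β*(x i0)) := mul_nonneg (by linarith) (by linarith)
      rw [h2]
      linarith
    have hid : gfun i0 α β t x - (t*ρ + (1/(2*t)) * ‖x - t•b‖^2)
        = (2*t*(x i0)*(s + β - α) + 2*t^2*(s*(α - β - s))
            + 2*t*(β*‖x‖ - β*(x i0)))/(2*t) := by
      rw [gfun, hA, hB, hρ_def]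
      field_simp
      ring
    have := div_nonneg hkey h2t.le
    linarith [hid ▸ this]
  -- key upper bound on the exponent, on the ball
  have key2 : ∀ t : ℝ, 1 ≤ t → ∀ x ∈ Metric.ball (z t) δ, gfun i0 α β t x ≤ t*ρ + C := by
    intro t ht x hxball
    have ht0 : 0 < t := lt_of_lt_of_le one_pos ht
    have hball : ‖x - z t‖ < δ := by
      rw [← dist_eq_norm]; exact Metric.mem_ball.mp hxball
    have hu : ‖x - t•b‖ ≤ R := by
      have hxe : x - t•b = (x - z t) + c := by rw [hz_def]; abel
      rw [hxe, hR_def]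
      calc ‖(x - z t) + c‖ ≤ ‖x - z t‖ + ‖c‖ := norm_add_le _ _
        _ ≤ Real.sqrt ℓ * δ + δ := by linarith [hc_norm]
    have hsingle_sub : (EuclideanSpace.single i0 (t*s) : EuclideanSpace ℝ (Fin ℓ))
        - EuclideanSpace.single i0 (α*t) = EuclideanSpace.single i0 (t*s - α*t) := by
      ext q
      simp [EuclideanSpace.single_apply]
      split <;> ring
    have hxaT : ‖x - EuclideanSpace.single i0 (α*t)‖ ≤ t*(α - s) + R := by
      have hxe : x - EuclideanSpace.single i0 (α*t)
          = (x - t•b) + (t•b - EuclideanSpace.single i0 (α*t)) := by abel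
      have hnb : ‖t•b - (EuclideanSpace.single i0 (α*t) : EuclideanSpace ℝ (Fin ℓ))‖
          = t*(α-s) := by
        rw [hb_def, hsmul_single, hsingle_sub, EuclideanSpace.norm_single, Real.norm_eq_abs,
          abs_of_nonpos (by nlinarith)]
        ring
      rw [hxe]
      calc ‖(x - t•b) + (t•b - EuclideanSpace.single i0 (α*t))‖
          ≤ ‖x - t•b‖ + ‖t•b - EuclideanSpace.single i0 (α*t)‖ := norm_add_le _ _
        _ ≤ R + t*(α-s) := by rw [hnb]; linarith
        _ = t*(α-s) + R := by ring
    have hxn : ‖x‖ ≤ t*s + R := by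
      have hnb : ‖t•b‖ = t*s := by
        rw [hb_def, hsmul_single, EuclideanSpace.norm_single, Real.norm_eq_abs,
          abs_of_nonneg (by positivity)]
      calc ‖x‖ = ‖(x - t•b) + t•b‖ := by rw [sub_add_cancel]
        _ ≤ ‖x - t•b‖ + ‖t•b‖ := norm_add_le _ _
        _ ≤ R + t*s := by rw [hnb]; linarith
        _ = t*s + R := by ring
    have hsq : ‖x - EuclideanSpace.single i0 (α*t)‖^2 ≤ (t*(α-s)+R)^2 :=
      pow_le_pow_left₀ (norm_nonneg _) hxaT 2
    have hdiv : ‖x - EuclideanSpace.single i0 (α*t)‖^2/(2*t)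
        ≤ t*(α-s)^2/2 + (α-s)*R + R^2/2 := by
      rw [div_le_iff₀ (by linarith)]
      nlinarith [hsq, mul_nonneg (sub_nonneg.mpr ht) (sq_nonneg R)]
    have hβn : β*‖x‖ ≤ β*(t*s+R) := mul_le_mul_of_nonneg_left hxn hβ.le
    rw [gfun, hρ_def, hC_def]
    nlinarith [mul_nonneg hs0 hR0, hdiv, hβn]
  -- positivity of coordinates on the ball
  have key0 : ∀ t : ℝ, 0 ≤ t → ∀ x ∈ Metric.ball (z t) δ, ∀ q, 0 ≤ x q := by
    intro t ht x hxball q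
    have hball : ‖x - z t‖ < δ := by
      rw [← dist_eq_norm]; exact Metric.mem_ball.mp hxball
    have h1' : |x q - z t q| ≤ δ :=
      le_of_lt (lt_of_le_of_lt (aux_abs_coord_le_norm (x - z t) q) hball)
    have hbq : 0 ≤ b q := by
      rw [hb_def, EuclideanSpace.single_apply]
      split
      · exact hs0
      · exact le_rfl
    have hzq : δ ≤ z t q := by
      have hz' : z t q = t * b q + δ := by rw [hz_def]; simp [hc_app]
      rw [hz']
      nlinarith [mul_nonneg ht hbq]
    have := (abs_le.mp h1').1
    linarith
  -- measurability of S
  have hS_closed : IsClosed S := by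
    have heq : S = (⋂ (j : Fin n) (q : Fin ℓ), {y : Fin n → EuclideanSpace ℝ (Fin ℓ) | 0 ≤ y j q})
        ∩ (⋂ (j : Fin n) (k : Fin n) (_ : j < k),
            {y : Fin n → EuclideanSpace ℝ (Fin ℓ) | ‖y j - y k‖ ≤ M}) := by
      rw [hS_def]
      ext y
      simp only [Set.mem_setOf_eq, Set.mem_inter_iff, Set.mem_iInter]
    rw [heq]
    apply IsClosed.inter
    · exact isClosed_iInter fun j => isClosed_iInter fun q =>
        isClosed_le continuous_const ((continuous_apply q).comp ((PiLp.continuous_ofLp 2 _).comp (continuous_apply j)))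
    · exact isClosed_iInter fun j => isClosed_iInter fun k => isClosed_iInter fun _ =>
        isClosed_le (((continuous_apply j).sub (continuous_apply k)).norm) continuous_const
  have hS_meas : MeasurableSet S := hS_closed.measurableSet
  -- product form of the integrand
  have hexp_prod : ∀ (t : ℝ) (y : Fin n → EuclideanSpace ℝ (Fin ℓ)),
      Real.exp (-(∑ j : Fin n, gfun i0 α β t (y j)))
        = ∏ j : Fin n, Real.exp (-(gfun i0 α β t (y j))) := by
    intro t y
    rw [← Real.exp_sum]
    congr 1
    rw [Finset.sum_neg_distrib]
  have hgauss_shift : ∀ t : ℝ, 0 < t → ∀ v : EuclideanSpace ℝ (Fin ℓ),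
      Integrable (fun x : EuclideanSpace ℝ (Fin ℓ) => Real.exp (-(1/(2*t)) * ‖x - v‖^2)) :=
    fun t ht v => (aux_integrable_gauss ht).comp_sub_right v
  have hone_int : ∀ t : ℝ, 0 < t →
      Integrable (fun x : EuclideanSpace ℝ (Fin ℓ) => Real.exp (-(gfun i0 α β t x))) := by
    intro t ht
    have hcont : Continuous (fun x : EuclideanSpace ℝ (Fin ℓ) => Real.exp (-(gfun i0 α β t x))) := by
      unfold gfun
      fun_prop
    refine (hgauss_shift t ht (EuclideanSpace.single i0 (α*t))).mono'
      hcont.aestronglyMeasurable (Filter.Eventually.of_forall fun x => ?_)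
    rw [Real.norm_eq_abs, abs_of_nonneg (Real.exp_pos _).le, Real.exp_le_exp, gfun]
    have hb1 : (0:ℝ) ≤ β*‖x‖ := by positivity
    have hb2 : -(1/(2*t)) * ‖x - EuclideanSpace.single i0 (α*t)‖^2
        = -(‖x - EuclideanSpace.single i0 (α*t)‖^2/(2*t)) := by ring
    linarith [hb2.ge, hb2.le]
  have hint : ∀ t : ℝ, 0 < t → Integrable (fun y : Fin n → EuclideanSpace ℝ (Fin ℓ) =>
      Real.exp (-(∑ j : Fin n, gfun i0 α β t (y j)))) := by
    intro t ht
    have h := MeasureTheory.Integrable.fintype_prod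
      (f := fun _ : Fin n => fun x : EuclideanSpace ℝ (Fin ℓ) => Real.exp (-(gfun i0 α β t x)))
      (fun _ => hone_int t ht)
    exact h.congr (Filter.Eventually.of_forall fun y => (hexp_prod t y).symm)
  -- upper bound
  have hup : ∀ t : ℝ, 1 ≤ t →
      (∫ y in S, Real.exp (-(∑ j : Fin n, gfun i0 α β t (y j))))
        ≤ (Real.exp (-(t*ρ)) * (π*(2*t)) ^ ((ℓ:ℝ)/2))^n := by
    intro t ht
    have ht0 : 0 < t := lt_of_lt_of_le one_pos ht
    have hH_int : Integrable (fun x : EuclideanSpace ℝ (Fin ℓ) =>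
        Real.exp (-(t*ρ)) * Real.exp (-(1/(2*t)) * ‖x - t•b‖^2)) :=
      (hgauss_shift t ht0 (t•b)).const_mul _
    have hHprod_int : Integrable (fun y : Fin n → EuclideanSpace ℝ (Fin ℓ) =>
        ∏ j : Fin n, (Real.exp (-(t*ρ)) * Real.exp (-(1/(2*t)) * ‖y j - t•b‖^2))) :=
      MeasureTheory.Integrable.fintype_prod
        (f := fun _ : Fin n => fun x : EuclideanSpace ℝ (Fin ℓ) =>
          Real.exp (-(t*ρ)) * Real.exp (-(1/(2*t)) * ‖x - t•b‖^2))
        (fun _ => hH_int)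
    have step1 : (∫ y in S, Real.exp (-(∑ j : Fin n, gfun i0 α β t (y j))))
        ≤ ∫ y in S, ∏ j : Fin n,
            (Real.exp (-(t*ρ)) * Real.exp (-(1/(2*t)) * ‖y j - t•b‖^2)) := by
      refine setIntegral_mono_on ((hint t ht0).integrableOn) (hHprod_int.integrableOn) hS_meas ?_
      intro y hy
      rw [hexp_prod]
      refine Finset.prod_le_prod (fun j _ => (Real.exp_pos _).le) (fun j _ => ?_)
      rw [← Real.exp_add, Real.exp_le_exp]
      rw [hS_def] at hy
      have := key1 t ht0 (y j) (fun q => hy.1 j q)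
      linarith
    have step2 : (∫ y in S, ∏ j : Fin n,
            (Real.exp (-(t*ρ)) * Real.exp (-(1/(2*t)) * ‖y j - t•b‖^2)))
        ≤ ∫ y : Fin n → EuclideanSpace ℝ (Fin ℓ), ∏ j : Fin n,
            (Real.exp (-(t*ρ)) * Real.exp (-(1/(2*t)) * ‖y j - t•b‖^2)) :=
      setIntegral_le_integral hHprod_int (Filter.Eventually.of_forall fun y =>
        Finset.prod_nonneg fun j _ => by positivity)
    have step3 : (∫ y : Fin n → EuclideanSpace ℝ (Fin ℓ), ∏ j : Fin n,
            (Real.exp (-(t*ρ)) * Real.exp (-(1/(2*t)) * ‖y j - t•b‖^2)))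
        = (Real.exp (-(t*ρ)) * (π*(2*t)) ^ ((ℓ:ℝ)/2))^n := by
      rw [MeasureTheory.volume_pi, MeasureTheory.integral_fintype_prod_eq_pow (ι := Fin n)
        (f := fun x : EuclideanSpace ℝ (Fin ℓ) =>
          Real.exp (-(t*ρ)) * Real.exp (-(1/(2*t)) * ‖x - t•b‖^2)), Fintype.card_fin]
      congr 1
      rw [MeasureTheory.integral_const_mul]
      congr 1
      rw [MeasureTheory.integral_sub_right_eq_self
        (fun x : EuclideanSpace ℝ (Fin ℓ) => Real.exp (-(1/(2*t)) * ‖x‖^2)) (t•b)]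
      exact aux_integral_gauss ht0
    calc (∫ y in S, Real.exp (-(∑ j : Fin n, gfun i0 α β t (y j))))
        ≤ ∫ y in S, ∏ j : Fin n,
            (Real.exp (-(t*ρ)) * Real.exp (-(1/(2*t)) * ‖y j - t•b‖^2)) := step1
      _ ≤ ∫ y : Fin n → EuclideanSpace ℝ (Fin ℓ), ∏ j : Fin n,
            (Real.exp (-(t*ρ)) * Real.exp (-(1/(2*t)) * ‖y j - t•b‖^2)) := step2
      _ = (Real.exp (-(t*ρ)) * (π*(2*t)) ^ ((ℓ:ℝ)/2))^n := step3
  -- lower bound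
  obtain ⟨V, hV_def⟩ : ∃ v : ℝ,
      v = (volume (Metric.ball (0 : EuclideanSpace ℝ (Fin ℓ)) δ)).toReal := ⟨_, rfl⟩
  have hV0 : 0 < V := by
    rw [hV_def]
    exact ENNReal.toReal_pos (Metric.measure_ball_pos _ _ hδ0).ne' measure_ball_lt_top.ne
  have hlow : ∀ t : ℝ, 1 ≤ t →
      Real.exp (-((n:ℝ)*(t*ρ + C))) * V^n
        ≤ ∫ y in S, Real.exp (-(∑ j : Fin n, gfun i0 α β t (y j))) := by
    intro t ht
    have ht0 : 0 < t := lt_of_lt_of_le one_pos ht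
    set B : Set (Fin n → EuclideanSpace ℝ (Fin ℓ)) :=
      Set.pi Set.univ (fun _ => Metric.ball (z t) δ) with hB_def
    have hBS : B ⊆ S := by
      intro y hy
      rw [hB_def, Set.mem_univ_pi] at hy
      rw [hS_def]
      refine ⟨fun j q => key0 t ht0.le (y j) (hy j) q, fun j k hjk => ?_⟩
      have d1 := Metric.mem_ball.mp (hy j)
      have d2 := Metric.mem_ball.mp (hy k)
      calc ‖y j - y k‖ = dist (y j) (y k) := (dist_eq_norm _ _).symm
        _ ≤ dist (y j) (z t) + dist (y k) (z t) := dist_triangle_right _ _ _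
        _ ≤ δ + δ := by linarith
        _ ≤ M := by linarith
    have hBme : MeasurableSet B := MeasurableSet.univ_pi fun _ => measurableSet_ball
    have hBvol : volume B = volume (Metric.ball (0 : EuclideanSpace ℝ (Fin ℓ)) δ) ^ n := by
      rw [hB_def, volume_pi_pi]
      simp [Measure.addHaar_ball_center]
    have hBfin : volume B ≠ ⊤ := by
      rw [hBvol]
      exact (ENNReal.pow_lt_top measure_ball_lt_top).ne
    have hconst : ∀ y ∈ B, Real.exp (-((n:ℝ)*(t*ρ+C)))
        ≤ Real.exp (-(∑ j : Fin n, gfun i0 α β t (y j))) := by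
      intro y hy
      rw [hB_def, Set.mem_univ_pi] at hy
      rw [Real.exp_le_exp, neg_le_neg_iff]
      calc (∑ j : Fin n, gfun i0 α β t (y j)) ≤ ∑ _j : Fin n, (t*ρ + C) :=
            Finset.sum_le_sum fun j _ => key2 t ht (y j) (hy j)
        _ = (n:ℝ)*(t*ρ+C) := by
            rw [Finset.sum_const, Finset.card_univ, Fintype.card_fin, nsmul_eq_mul]
    have hge := setIntegral_ge_of_const_le hBme hBfin hconst ((hint t ht0).integrableOn)
    have hmono := setIntegral_mono_set ((hint t ht0).integrableOn)
      (Filter.Eventually.of_forall fun y => (Real.exp_pos _).le)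
      (HasSubset.Subset.eventuallyLE hBS)
    calc Real.exp (-((n:ℝ)*(t*ρ + C))) * V^n
        = Real.exp (-((n:ℝ)*(t*ρ + C))) * (volume B).toReal := by
          rw [hV_def, hBvol, ENNReal.toReal_pow]
      _ ≤ ∫ y in B, Real.exp (-(∑ j : Fin n, gfun i0 α β t (y j))) := by rw [mul_comm]; exact hge
      _ ≤ ∫ y in S, Real.exp (-(∑ j : Fin n, gfun i0 α β t (y j))) := hmono
  have hIpos : ∀ t : ℝ, 1 ≤ t →
      0 < ∫ y in S, Real.exp (-(∑ j : Fin n, gfun i0 α β t (y j))) := by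
    intro t ht
    refine lt_of_lt_of_le ?_ (hlow t ht)
    positivity
  -- logs of the bounds
  have hlog_low : ∀ t : ℝ, 1 ≤ t →
      (1/t) * Real.log (Real.exp (-((n:ℝ)*(t*ρ + C))) * V^n)
        = -((n:ℝ)*ρ) + (-((n:ℝ)*C) + (n:ℝ)*Real.log V)/t := by
    intro t ht
    have ht0 : 0 < t := lt_of_lt_of_le one_pos ht
    rw [Real.log_mul (Real.exp_ne_zero _) (by positivity), Real.log_exp, Real.log_pow]
    field_simp
    ring
  have hlog_up : ∀ t : ℝ, 1 ≤ t →
      (1/t) * Real.log ((Real.exp (-(t*ρ)) * (π*(2*t)) ^ ((ℓ:ℝ)/2))^n)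
        = -((n:ℝ)*ρ) + ((n:ℝ)*((ℓ:ℝ)/2)*Real.log (π*2))/t
            + ((n:ℝ)*((ℓ:ℝ)/2))*(Real.log t/t) := by
    intro t ht
    have ht0 : 0 < t := lt_of_lt_of_le one_pos ht
    have hP : (0:ℝ) < π*(2*t) := by positivity
    rw [Real.log_pow, Real.log_mul (Real.exp_ne_zero _) (Real.rpow_pos_of_pos hP _).ne',
      Real.log_exp, Real.log_rpow hP, show π*(2*t) = (π*2)*t by ring,
      Real.log_mul (by positivity) ht0.ne']
    field_simp
    ring
  have tendsto_low : Tendsto (fun t : ℝ =>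
      (1/t) * Real.log (Real.exp (-((n:ℝ)*(t*ρ + C))) * V^n)) atTop (𝓝 (-((n:ℝ)*ρ))) := by
    have h : Tendsto (fun t : ℝ => -((n:ℝ)*ρ) + (-((n:ℝ)*C) + (n:ℝ)*Real.log V)/t) atTop
        (𝓝 (-((n:ℝ)*ρ) + 0)) :=
      tendsto_const_nhds.add (tendsto_const_nhds.div_atTop tendsto_id)
    rw [add_zero] at h
    refine Tendsto.congr' ?_ h
    filter_upwards [eventually_ge_atTop (1:ℝ)] with t ht
    exact (hlog_low t ht).symm
  have tendsto_up : Tendsto (fun t : ℝ =>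
      (1/t) * Real.log ((Real.exp (-(t*ρ)) * (π*(2*t)) ^ ((ℓ:ℝ)/2))^n)) atTop
      (𝓝 (-((n:ℝ)*ρ))) := by
    have h0 : Tendsto (fun t : ℝ => Real.log t / t) atTop (𝓝 0) :=
      Real.isLittleO_log_id_atTop.tendsto_div_nhds_zero
    have h : Tendsto (fun t : ℝ => -((n:ℝ)*ρ) + ((n:ℝ)*((ℓ:ℝ)/2)*Real.log (π*2))/t
        + ((n:ℝ)*((ℓ:ℝ)/2))*(Real.log t/t)) atTop
        (𝓝 (-((n:ℝ)*ρ) + 0 + ((n:ℝ)*((ℓ:ℝ)/2))*0)) :=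
      ((tendsto_const_nhds.add (tendsto_const_nhds.div_atTop tendsto_id))).add
        (tendsto_const_nhds.mul h0)
    rw [add_zero, mul_zero, add_zero] at h
    refine Tendsto.congr' ?_ h
    filter_upwards [eventually_ge_atTop (1:ℝ)] with t ht
    exact (hlog_up t ht).symm
  -- squeeze
  refine tendsto_of_tendsto_of_tendsto_of_le_of_le' tendsto_low tendsto_up ?_ ?_
  · filter_upwards [eventually_ge_atTop (1:ℝ)] with t ht
    have h1t : (0:ℝ) ≤ 1/t := by positivity
    exact mul_le_mul_of_nonneg_left
      (Real.log_le_log (by positivity) (hlow t ht)) h1t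
  · filter_upwards [eventually_ge_atTop (1:ℝ)] with t ht
    have h1t : (0:ℝ) ≤ 1/t := by positivity
    exact mul_le_mul_of_nonneg_left
      (Real.log_le_log (hIpos t ht) (hup t ht)) h1t


end
end
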